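/- arXiv:2305.03850 — 7 statements merged into one kernel-verified Lean document; each statement's English description precedes it below -/
import Mathlib

section
/- Let p be a probability distribution on [n]. There exist at least two distinct optimal guessing functions for p if and only if there exist distinct indices i ≠ j in [n] with p_i = p_j. -/
open Finset

/-- `p` is a probability distribution on `Fin n` (representing `[n] = {1,…,n}`). -/
def IsDist {n : ℕ} (p : Fin n → ℝ) : Prop :=
  (∀ i, 0 ≤ p i) ∧ ∑ i, p i = 1

/-- The guesswork `E_p[G] = Σ_i p_i · G(i)`, where the guessing function `G`
takes values in `{1,…,n}` (hence the `+ 1` on the `Fin n` value). -/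
noncomputable def guesswork {n : ℕ} (p : Fin n → ℝ) (G : Equiv.Perm (Fin n)) : ℝ :=
  ∑ i, p i * (((G i : ℕ) : ℝ) + 1)

/-- `G` is an optimal guessing function for `p`. -/
def IsOptimal {n : ℕ} (p : Fin n → ℝ) (G : Equiv.Perm (Fin n)) : Prop :=
  ∀ H : Equiv.Perm (Fin n), guesswork p G ≤ guesswork p H

/-- The expected cost `Δ_p(G₁, G₂) = Σ_i p_i (G₂(i) − G₁(i))`. -/
noncomputable def Delta {n : ℕ} (p : Fin n → ℝ) (G1 G2 : Equiv.Perm (Fin n)) : ℝ :=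
  ∑ i, p i * (((G2 i : ℕ) : ℝ) - ((G1 i : ℕ) : ℝ))

/-- The probability-weighted Kendall tau signed divergence
`K_p(σ₁,σ₂) = Σ_{(i,j): σ₁(i)<σ₁(j)} (p_i − p_j) · 1{σ₂(i) > σ₂(j)}`. -/
noncomputable def Kdiv {n : ℕ} (p : Fin n → ℝ) (σ1 σ2 : Equiv.Perm (Fin n)) : ℝ :=
  ∑ i, ∑ j, if σ1 i < σ1 j ∧ σ2 j < σ2 i then p i - p j else 0

/-- The expected cost of guesswork under mismatch
`δ(p,q) = min_{G_q ∈ 𝒢_q} Δ_p(G_p, G_q)` (as an infimum over the, finite and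
nonempty, set of values attained by optimal guessing functions for `q`). -/
noncomputable def mismatchCost {n : ℕ} (p q : Fin n → ℝ)
    (Gp : Equiv.Perm (Fin n)) : ℝ :=
  sInf {x | ∃ Gq : Equiv.Perm (Fin n), IsOptimal q Gq ∧ x = Delta p Gp Gq}

/-- The total variation distance `d_TV(p,q) = (1/2) Σ_i |p_i − q_i|`. -/
noncomputable def dTV {n : ℕ} (p q : Fin n → ℝ) : ℝ :=
  (1/2) * ∑ i, |p i - q i|

/-- `τ` is an adjacent transposition: it exchanges two consecutive elements
`j` and `j+1` and fixes everything else. -/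
def IsAdjTransposition {n : ℕ} (τ : Equiv.Perm (Fin n)) : Prop :=
  ∃ j k : Fin n, (j : ℕ) + 1 = (k : ℕ) ∧ τ = Equiv.swap j k

/-- `M` is a set of disjoint pairs: each pair has distinct entries, and each
element of `[n]` occurs in at most one pair of `M`. -/
def DisjointPairs {n : ℕ} (M : Finset (Fin n × Fin n)) : Prop :=
  (∀ m ∈ M, m.1 ≠ m.2) ∧
  ∀ k : Fin n, ∀ m1 ∈ M, ∀ m2 ∈ M,
    (k = m1.1 ∨ k = m1.2) → (k = m2.1 ∨ k = m2.2) → m1 = m2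

/-- there are at least two distinct optimal guessing functions for
`p` iff `p` assigns the same probability to two distinct points. -/
theorem two_optimal_iff_tie {n : ℕ} (p : Fin n → ℝ) (hp : IsDist p) :
    (∃ G1 G2 : Equiv.Perm (Fin n), G1 ≠ G2 ∧ IsOptimal p G1 ∧ IsOptimal p G2) ↔
      (∃ i j : Fin n, i ≠ j ∧ p i = p j) := by
  have key : ∀ (G : Equiv.Perm (Fin n)) (i j : Fin n), i ≠ j →
      guesswork p ((Equiv.swap i j).trans G) - guesswork p G
        = (p i - p j) * (((G j : ℕ) : ℝ) - ((G i : ℕ) : ℝ)) := by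
    intro G i j hij
    have hA : guesswork p ((Equiv.swap i j).trans G)
        = ∑ k, p (Equiv.swap i j k) * (((G k : ℕ) : ℝ) + 1) := by
      unfold guesswork
      rw [← Equiv.sum_comp (Equiv.swap i j)
        (fun k => p (Equiv.swap i j k) * (((G k : ℕ) : ℝ) + 1))]
      simp [Equiv.trans_apply]
    rw [hA]
    unfold guesswork
    rw [← Finset.sum_sub_distrib]
    have h0 : ∀ k ∈ (Finset.univ : Finset (Fin n)), k ∉ ({i, j} : Finset (Fin n)) →
        p (Equiv.swap i j k) * (((G k : ℕ) : ℝ) + 1) - p k * (((G k : ℕ) : ℝ) + 1) = 0 := by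
      intro k _ hk
      simp only [Finset.mem_insert, Finset.mem_singleton, not_or] at hk
      rw [Equiv.swap_apply_of_ne_of_ne hk.1 hk.2]
      ring
    rw [← Finset.sum_subset (Finset.subset_univ ({i, j} : Finset (Fin n))) h0]
    rw [Finset.sum_pair hij]
    rw [Equiv.swap_apply_left, Equiv.swap_apply_right]
    ring
  have sorted : ∀ (G : Equiv.Perm (Fin n)), IsOptimal p G →
      ∀ i j : Fin n, p j < p i → G i < G j := by
    intro G hG i j hpij
    have hij : i ≠ j := fun h => absurd rfl (h ▸ hpij).ne
    have h1 := hG ((Equiv.swap i j).trans G)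
    have h2 := key G i j hij
    have h3 : 0 ≤ (p i - p j) * (((G j : ℕ) : ℝ) - ((G i : ℕ) : ℝ)) := by linarith
    have h4 : 0 ≤ (((G j : ℕ) : ℝ) - ((G i : ℕ) : ℝ)) := by
      by_contra hlt
      push_neg at hlt
      nlinarith
    have h5r : ((G i : ℕ) : ℝ) ≤ ((G j : ℕ) : ℝ) := by linarith
    have h5 : (G i : ℕ) ≤ (G j : ℕ) := by exact_mod_cast h5r
    have h6 : G i ≠ G j := fun h => hij (G.injective h)
    exact lt_of_le_of_ne (Fin.le_def.mpr h5) h6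
  constructor
  · rintro ⟨G1, G2, hne, hG1, hG2⟩
    by_contra hno
    push_neg at hno
    have hinj : ∀ i j : Fin n, i ≠ j → p i ≠ p j := fun i j h => hno i j h
    apply hne
    have hsm : StrictMono (fun a => G2 (G1.symm a)) := by
      intro a b hab
      set i := G1.symm a with hi
      set j := G1.symm b with hj
      have hij : i ≠ j := by
        intro h
        exact absurd (by rw [hi, hj] at h; simpa using congrArg G1 h) hab.ne
      rcases lt_trichotomy (p i) (p j) with h | h | h
      · have := sorted G1 hG1 j i h
        simp only [hi, hj, Equiv.apply_symm_apply] at this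
        exact absurd hab (not_lt.mpr this.le)
      · exact absurd h (hinj i j hij)
      · exact sorted G2 hG2 i j h
    have hid : (fun a => G2 (G1.symm a)) = id := by
      haveI : WellFoundedLT (Fin n) := Finite.to_wellFoundedLT
      apply (StrictMono.range_inj hsm strictMono_id).mp
      rw [Set.range_id]
      exact Set.range_eq_univ.mpr fun y => ⟨G1 (G2.symm y), by simp⟩
    ext x
    have h := congrFun hid (G1 x)
    simp only [Equiv.symm_apply_apply, id] at h
    exact congrArg Fin.val h.symm
  · rintro ⟨i, j, hij, hpij⟩
    obtain ⟨G, hG⟩ := Finite.exists_min (guesswork p)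
    refine ⟨G, (Equiv.swap i j).trans G, ?_, hG, ?_⟩
    · intro h
      have : ((Equiv.swap i j).trans G) i = G i := by rw [← h]
      simp only [Equiv.trans_apply, Equiv.swap_apply_left] at this
      exact hij (G.injective this).symm
    · intro H
      have h2 := key G i j hij
      rw [hpij] at h2
      simp only [sub_self, zero_mul] at h2
      have : guesswork p ((Equiv.swap i j).trans G) = guesswork p G := by linarith
      rw [this]
      exact hG H
end

section
/- Let σ_1, σ_2, σ_3 be permutations of [n] such that σ_3 = τ ∘ σ_2 for some adjacent transposition τ. Then for every probability distribution p on [n], K_p(σ_1, σ_3) = K_p(σ_1, σ_2) + K_p(σ_2, σ_3). -/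
open Finset

/-- the "triangle equality" for `K_p` when `σ₂` and `σ₃` differ by
an adjacent transposition. -/
theorem kdiv_triangle_adjacent {n : ℕ} (p : Fin n → ℝ) (hp : IsDist p)
    (σ1 σ2 σ3 τ : Equiv.Perm (Fin n)) (hτ : IsAdjTransposition τ)
    (h : σ3 = τ * σ2) :
    Kdiv p σ1 σ3 = Kdiv p σ1 σ2 + Kdiv p σ2 σ3 := by
  obtain ⟨j, k, hjk, hτeq⟩ := hτ
  subst hτeq
  subst h
  set a := σ2⁻¹ j with ha
  set b := σ2⁻¹ k with hb
  have h2a : σ2 a = j := Equiv.apply_symm_apply σ2 j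
  have h2b : σ2 b = k := Equiv.apply_symm_apply σ2 k
  have hjkne : j ≠ k := by
    intro hh; rw [hh] at hjk; omega
  have hab : a ≠ b := by
    intro hh; apply hjkne; rw [← h2a, ← h2b, hh]
  have hvala : ∀ x : Fin n, σ2 x = j ↔ x = a := by
    intro x
    constructor
    · intro hh; rw [ha, ← hh]; simp
    · intro hh; rw [hh]; exact h2a
  have hvalb : ∀ x : Fin n, σ2 x = k ↔ x = b := by
    intro x
    constructor
    · intro hh; rw [hb, ← hh]; simp
    · intro hh; rw [hh]; exact h2b
  have hval : ∀ x : Fin n, (((Equiv.swap j k * σ2) x : Fin n) : ℕ)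
      = if ((σ2 x : Fin n) : ℕ) = (j : ℕ) then (k : ℕ)
        else if ((σ2 x : Fin n) : ℕ) = (k : ℕ) then (j : ℕ)
        else ((σ2 x : Fin n) : ℕ) := by
    intro x
    simp only [Equiv.Perm.mul_apply, Equiv.swap_apply_def, ← Fin.val_eq_val]
    split_ifs <;> rfl
  -- key: order relations are preserved except for the pair (a,b)/(b,a)
  have key : ∀ i i' : Fin n, ¬(i = a ∧ i' = b) → ¬(i = b ∧ i' = a) →
      ((Equiv.swap j k * σ2) i' < (Equiv.swap j k * σ2) i ↔ σ2 i' < σ2 i) := by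
    intro i i' h1 h2
    rw [Fin.lt_def, Fin.lt_def, hval i, hval i']
    by_cases hii : i = i'
    · subst hii; split_ifs <;> omega
    have hne : ((σ2 i : Fin n) : ℕ) ≠ ((σ2 i' : Fin n) : ℕ) :=
      fun hh => hii (σ2.injective (Fin.val_injective hh))
    have c1 : ¬(((σ2 i : Fin n) : ℕ) = (j : ℕ) ∧ ((σ2 i' : Fin n) : ℕ) = (k : ℕ)) := by
      rintro ⟨e1, e2⟩
      rw [Fin.val_eq_val, hvala] at e1
      rw [Fin.val_eq_val, hvalb] at e2
      exact h1 ⟨e1, e2⟩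
    have c2 : ¬(((σ2 i : Fin n) : ℕ) = (k : ℕ) ∧ ((σ2 i' : Fin n) : ℕ) = (j : ℕ)) := by
      rintro ⟨e1, e2⟩
      rw [Fin.val_eq_val, hvalb] at e1
      rw [Fin.val_eq_val, hvala] at e2
      exact h2 ⟨e1, e2⟩
    split_ifs <;> omega
  have h3a : (Equiv.swap j k * σ2) a = k := by
    simp [Equiv.Perm.mul_apply, h2a]
  have h3b : (Equiv.swap j k * σ2) b = j := by
    simp [Equiv.Perm.mul_apply, h2b]
  have hjk' : j < k := by rw [Fin.lt_def]; omega
  -- rewrite Kdiv as a sum over pairs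
  have hK : ∀ σ σ' : Equiv.Perm (Fin n), Kdiv p σ σ' =
      ∑ x : Fin n × Fin n, (if σ x.1 < σ x.2 ∧ σ' x.2 < σ' x.1 then p x.1 - p x.2 else 0) := by
    intro σ σ'
    rw [Kdiv]
    exact (Fintype.sum_prod_type
      (f := fun x : Fin n × Fin n =>
        if σ x.1 < σ x.2 ∧ σ' x.2 < σ' x.1 then p x.1 - p x.2 else 0)).symm
  have hPne : ((a, b) : Fin n × Fin n) ≠ (b, a) := by
    intro hh
    exact hab (congrArg Prod.fst hh)
  have hsplit : ∀ σ σ' : Equiv.Perm (Fin n), Kdiv p σ σ' =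
      (if σ a < σ b ∧ σ' b < σ' a then p a - p b else 0)
      + (if σ b < σ a ∧ σ' a < σ' b then p b - p a else 0)
      + ∑ x ∈ Finset.univ \ ({(a, b), (b, a)} : Finset (Fin n × Fin n)),
          (if σ x.1 < σ x.2 ∧ σ' x.2 < σ' x.1 then p x.1 - p x.2 else 0) := by
    intro σ σ'
    rw [hK]
    rw [← Finset.sum_sdiff (Finset.subset_univ ({(a, b), (b, a)} : Finset (Fin n × Fin n)))]
    rw [Finset.sum_pair hPne]
    ring
  rw [hsplit σ1 (Equiv.swap j k * σ2), hsplit σ1 σ2, hsplit σ2 (Equiv.swap j k * σ2)]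
  -- the tails for σ1 agree
  have htail : ∀ x ∈ Finset.univ \ ({(a, b), (b, a)} : Finset (Fin n × Fin n)),
      (if σ1 x.1 < σ1 x.2 ∧ (Equiv.swap j k * σ2) x.2 < (Equiv.swap j k * σ2) x.1
        then p x.1 - p x.2 else 0)
      = (if σ1 x.1 < σ1 x.2 ∧ σ2 x.2 < σ2 x.1 then p x.1 - p x.2 else 0) := by
    intro x hx
    simp only [Finset.mem_sdiff, Finset.mem_insert, Finset.mem_singleton] at hx
    have hx1 : ¬(x.1 = a ∧ x.2 = b) := by
      rintro ⟨e1, e2⟩; exact hx.2 (Or.inl (Prod.ext e1 e2))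
    have hx2 : ¬(x.1 = b ∧ x.2 = a) := by
      rintro ⟨e1, e2⟩; exact hx.2 (Or.inr (Prod.ext e1 e2))
    exact if_congr (and_congr Iff.rfl (key x.1 x.2 hx1 hx2)) rfl rfl
  rw [Finset.sum_congr rfl htail]
  -- the tail for (σ2, σ3) vanishes
  have htail0 : ∀ x ∈ Finset.univ \ ({(a, b), (b, a)} : Finset (Fin n × Fin n)),
      (if σ2 x.1 < σ2 x.2 ∧ (Equiv.swap j k * σ2) x.2 < (Equiv.swap j k * σ2) x.1
        then p x.1 - p x.2 else 0) = 0 := by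
    intro x hx
    simp only [Finset.mem_sdiff, Finset.mem_insert, Finset.mem_singleton] at hx
    have hx1 : ¬(x.1 = a ∧ x.2 = b) := by
      rintro ⟨e1, e2⟩; exact hx.2 (Or.inl (Prod.ext e1 e2))
    have hx2 : ¬(x.1 = b ∧ x.2 = a) := by
      rintro ⟨e1, e2⟩; exact hx.2 (Or.inr (Prod.ext e1 e2))
    rw [if_neg]
    rintro ⟨hlt, hlt'⟩
    rw [key x.1 x.2 hx1 hx2] at hlt'
    exact absurd hlt (not_lt.mpr (le_of_lt hlt'))
  rw [Finset.sum_eq_zero htail0]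
  -- now evaluate the corner terms
  simp only [h3a, h3b, h2a, h2b]
  have hnk : ¬(k < j) := not_lt.mpr (le_of_lt hjk')
  have hs1 : σ1 a ≠ σ1 b := fun hh => hab (σ1.injective hh)
  rcases lt_or_gt_of_ne hs1 with hlt | hlt
  · rw [if_pos ⟨hlt, hjk'⟩, if_neg (fun hh => hnk hh.2), if_neg (fun hh => hnk hh.2),
      if_neg (fun hh => absurd hh.1 (not_lt.mpr (le_of_lt hlt))), if_pos ⟨hjk', hjk'⟩,
      if_neg (fun hh => hnk hh.1)]
    ring
  · rw [if_neg (fun hh => absurd hh.1 (not_lt.mpr (le_of_lt hlt))),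
      if_neg (fun hh => hnk hh.2), if_neg (fun hh => hnk hh.2),
      if_pos ⟨hlt, hjk'⟩, if_pos ⟨hjk', hjk'⟩, if_neg (fun hh => hnk hh.1)]
    ring
end

section
/- Let p be a probability distribution on [n] and let G_1, G_2 be any two permutations of [n]. Then the expected cost of G_2 over G_1 with respect to p equals the probability-weighted Kendall tau signed divergence between G_1 and G_2 with respect to p, i.e., Δ_p(G_1, G_2) = K_p(G_1, G_2). -/
open Finset

lemma perm_val_eq_sum {n : ℕ} (G : Equiv.Perm (Fin n)) (i : Fin n) :
    ((G i : ℕ) : ℝ) = ∑ j, (if G j < G i then (1:ℝ) else 0) := by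
  rw [Finset.sum_boole]
  norm_num
  rw [← Fin.card_Iio (G i)]
  apply Finset.card_bij (fun j _ => G.symm j)
  · intro a ha; simpa using Finset.mem_Iio.mp ha
  · intro a _ b _ h; exact G.symm.injective h
  · intro b hb; exact ⟨G b, Finset.mem_Iio.mpr (by simpa using hb), by simp⟩

/-- the expected cost equals the probability-weighted Kendall tau
signed divergence: `Δ_p(G₁,G₂) = K_p(G₁,G₂)`. -/
theorem delta_eq_kdiv {n : ℕ} (p : Fin n → ℝ) (hp : IsDist p)
    (G1 G2 : Equiv.Perm (Fin n)) :
    Delta p G1 G2 = Kdiv p G1 G2 := by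
  have key : ∀ i j : Fin n,
      p i * ((if G2 j < G2 i then (1:ℝ) else 0) - (if G1 j < G1 i then (1:ℝ) else 0))
      = (if G1 i < G1 j ∧ G2 j < G2 i then p i else 0)
        - (if G1 j < G1 i ∧ G2 i < G2 j then p i else 0) := by
    intro i j
    by_cases h : i = j
    · subst h; simp
    · have h1 : G1 i ≠ G1 j := fun e => h (G1.injective e)
      have h2 : G2 i ≠ G2 j := fun e => h (G2.injective e)
      rcases h1.lt_or_gt with a | a <;> rcases h2.lt_or_gt with b | b <;>
        simp [a, b, asymm a, asymm b] <;> ring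
  have lhs : Delta p G1 G2 = ∑ i, ∑ j,
      ((if G1 i < G1 j ∧ G2 j < G2 i then p i else 0)
        - (if G1 j < G1 i ∧ G2 i < G2 j then p i else 0)) := by
    unfold Delta
    refine Finset.sum_congr rfl fun i _ => ?_
    rw [perm_val_eq_sum G1 i, perm_val_eq_sum G2 i, ← Finset.sum_sub_distrib,
      Finset.mul_sum]
    exact Finset.sum_congr rfl fun j _ => key i j
  have rhs : Kdiv p G1 G2 =
      (∑ i, ∑ j, if G1 i < G1 j ∧ G2 j < G2 i then p i else 0)
      - ∑ i, ∑ j, if G1 j < G1 i ∧ G2 i < G2 j then p i else 0 := by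
    unfold Kdiv
    have e : ∀ i j : Fin n, (if G1 i < G1 j ∧ G2 j < G2 i then p i - p j else 0)
        = (if G1 i < G1 j ∧ G2 j < G2 i then p i else 0)
          - (if G1 i < G1 j ∧ G2 j < G2 i then p j else 0) := by
      intro i j; split_ifs <;> ring
    simp_rw [e, Finset.sum_sub_distrib]
    congr 1
    rw [Finset.sum_comm]
  rw [lhs, rhs]
  simp_rw [Finset.sum_sub_distrib]
end

section
/- For any three permutations σ_1, σ_2, σ_3 of [n] and any probability distribution p on [n], K_p(σ_1, σ_3) = K_p(σ_1, σ_2) + K_p(σ_2, σ_3). -/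
open Finset

/-- the general "triangle equality" for `K_p`. -/
theorem kdiv_triangle {n : ℕ} (p : Fin n → ℝ) (hp : IsDist p)
    (σ1 σ2 σ3 : Equiv.Perm (Fin n)) :
    Kdiv p σ1 σ3 = Kdiv p σ1 σ2 + Kdiv p σ2 σ3 := by
  have key : ∀ i j : Fin n,
      ((if σ1 i < σ1 j ∧ σ3 j < σ3 i then p i - p j else 0) +
       (if σ1 j < σ1 i ∧ σ3 i < σ3 j then p j - p i else 0)) =
      ((if σ1 i < σ1 j ∧ σ2 j < σ2 i then p i - p j else 0) +
       (if σ1 j < σ1 i ∧ σ2 i < σ2 j then p j - p i else 0)) +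
      ((if σ2 i < σ2 j ∧ σ3 j < σ3 i then p i - p j else 0) +
       (if σ2 j < σ2 i ∧ σ3 i < σ3 j then p j - p i else 0)) := by
    intro i j
    rcases eq_or_ne i j with rfl | hij
    · simp
    · have h1 : σ1 i ≠ σ1 j := σ1.injective.ne hij
      have h2 : σ2 i ≠ σ2 j := σ2.injective.ne hij
      have h3 : σ3 i ≠ σ3 j := σ3.injective.ne hij
      rw [Fin.ne_iff_vne] at h1 h2 h3
      simp only [Fin.lt_def]
      split_ifs <;> first | ring1 | (exfalso; omega)
  have hswap : ∀ f : Fin n → Fin n → ℝ,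
      (∑ i, ∑ j, f i j) = ∑ i, ∑ j, f j i := fun f => Finset.sum_comm
  have hsum : ∀ σ σ' : Equiv.Perm (Fin n),
      2 * Kdiv p σ σ' = ∑ i, ∑ j,
        ((if σ i < σ j ∧ σ' j < σ' i then p i - p j else 0) +
         (if σ j < σ i ∧ σ' i < σ' j then p j - p i else 0)) := by
    intro σ σ'
    rw [two_mul, Kdiv]
    nth_rewrite 2 [hswap (fun i j => if σ i < σ j ∧ σ' j < σ' i then p i - p j else 0)]
    simp [← Finset.sum_add_distrib]
  have h13 := hsum σ1 σ3
  have h12 := hsum σ1 σ2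
  have h23 := hsum σ2 σ3
  have hcomb : (∑ i, ∑ j,
        ((if σ1 i < σ1 j ∧ σ3 j < σ3 i then p i - p j else 0) +
         (if σ1 j < σ1 i ∧ σ3 i < σ3 j then p j - p i else 0))) =
      (∑ i, ∑ j,
        ((if σ1 i < σ1 j ∧ σ2 j < σ2 i then p i - p j else 0) +
         (if σ1 j < σ1 i ∧ σ2 i < σ2 j then p j - p i else 0))) +
      (∑ i, ∑ j,
        ((if σ2 i < σ2 j ∧ σ3 j < σ3 i then p i - p j else 0) +
         (if σ2 j < σ2 i ∧ σ3 i < σ3 j then p j - p i else 0))) := by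
    rw [← Finset.sum_add_distrib]
    refine Finset.sum_congr rfl fun i _ => ?_
    rw [← Finset.sum_add_distrib]
    exact Finset.sum_congr rfl fun j _ => key i j
  linarith [h13, h12, h23, hcomb]
end

section
/- Let n be odd and let M_1, M_2 ⊂ [n] × [n] be sets of disjoint pairs for which there exists a bridge pair (k_1, k_2). Let M = M_1 ∪ M_2 ∪ {(k_1, k_2)}. Let p and q be probability distributions on [n] such that p_i ≥ p_j and q_i ≤ q_j for all (i,j) ∈ M. If d_TV(p,q) ≤ ε, then Σ_{(i,j) ∈ M} (p_i − p_j) ≤ 4ε. -/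
open Finset

lemma sum_union_le' {n : ℕ} (g : Fin n × Fin n → ℝ) (hg : ∀ m, 0 ≤ g m)
    (A B : Finset (Fin n × Fin n)) :
    ∑ m ∈ A ∪ B, g m ≤ ∑ m ∈ A, g m + ∑ m ∈ B, g m := by
  have h := Finset.sum_union_inter (s₁ := A) (s₂ := B) (f := g)
  have h2 : 0 ≤ ∑ m ∈ A ∩ B, g m := Finset.sum_nonneg fun m _ => hg m
  linarith

lemma pair_sum_le {n : ℕ} (f : Fin n → ℝ) (hf : ∀ i, 0 ≤ f i)
    (M : Finset (Fin n × Fin n)) (hM : DisjointPairs M)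
    (k : Fin n) (hk : ∀ m ∈ M, k ≠ m.1 ∧ k ≠ m.2) :
    (∑ m ∈ M, (f m.1 + f m.2)) + f k ≤ ∑ i, f i := by
  obtain ⟨hne, hdisj⟩ := hM
  set S1 := M.image Prod.fst with hS1
  set S2 := M.image Prod.snd with hS2
  have h1 : ∑ i ∈ S1, f i = ∑ m ∈ M, f m.1 := by
    rw [hS1, Finset.sum_image]
    intro a ha b hb hab
    exact hdisj a.1 a ha b hb (Or.inl rfl) (Or.inl hab)
  have h2 : ∑ i ∈ S2, f i = ∑ m ∈ M, f m.2 := by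
    rw [hS2, Finset.sum_image]
    intro a ha b hb hab
    exact hdisj a.2 a ha b hb (Or.inr rfl) (Or.inr hab)
  have hd : Disjoint S1 S2 := by
    rw [Finset.disjoint_left]
    intro i hi1 hi2
    rw [hS1, Finset.mem_image] at hi1
    rw [hS2, Finset.mem_image] at hi2
    obtain ⟨a, ha, rfl⟩ := hi1
    obtain ⟨b, hb, hab⟩ := hi2
    have := hdisj a.1 a ha b hb (Or.inl rfl) (Or.inr hab.symm)
    subst this
    exact hne a ha hab.symm
  have hU : ∑ i ∈ S1 ∪ S2, f i = ∑ m ∈ M, (f m.1 + f m.2) := by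
    rw [Finset.sum_union hd, h1, h2, Finset.sum_add_distrib]
  have hkU : k ∉ S1 ∪ S2 := by
    intro hmem
    rcases Finset.mem_union.mp hmem with h | h
    · obtain ⟨a, ha, hak⟩ := Finset.mem_image.mp h
      exact (hk a ha).1 hak.symm
    · obtain ⟨a, ha, hak⟩ := Finset.mem_image.mp h
      exact (hk a ha).2 hak.symm
  have hins : ∑ i ∈ insert k (S1 ∪ S2), f i = f k + ∑ i ∈ S1 ∪ S2, f i :=
    Finset.sum_insert hkU
  have hsub : ∑ i ∈ insert k (S1 ∪ S2), f i ≤ ∑ i, f i :=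
    Finset.sum_le_sum_of_subset_of_nonneg (Finset.subset_univ _)
      (fun i _ _ => hf i)
  linarith [hU ▸ hins ▸ hsub]

/-- the analogue of the disjoint-pairs bound with a bridge pair:
for odd `n`, sets of disjoint pairs `M₁, M₂` of size `(n−1)/2` missing the
distinct elements `k₁, k₂` respectively, and `M = M₁ ∪ M₂ ∪ {(k₁,k₂)}`, if
`p_i ≥ p_j`, `q_i ≤ q_j` on each pair of `M` and `d_TV(p,q) ≤ ε`, then
`Σ_{(i,j)∈M} (p_i − p_j) ≤ 4ε`. -/
theorem sum_bridge_pairs_le {n : ℕ} (hn : Odd n) (p q : Fin n → ℝ)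
    (hp : IsDist p) (hq : IsDist q)
    (M1 M2 : Finset (Fin n × Fin n))
    (hM1 : DisjointPairs M1) (hM2 : DisjointPairs M2)
    (hcard1 : M1.card = (n - 1) / 2) (hcard2 : M2.card = (n - 1) / 2)
    (k1 k2 : Fin n) (hk : k1 ≠ k2)
    (hk1 : ∀ m ∈ M1, k1 ≠ m.1 ∧ k1 ≠ m.2)
    (hk2 : ∀ m ∈ M2, k2 ≠ m.1 ∧ k2 ≠ m.2)
    (M : Finset (Fin n × Fin n)) (hM : M = M1 ∪ M2 ∪ {(k1, k2)})
    (hpq : ∀ m ∈ M, p m.2 ≤ p m.1 ∧ q m.1 ≤ q m.2)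
    (ε : ℝ) (hε : dTV p q ≤ ε) :
    ∑ m ∈ M, (p m.1 - p m.2) ≤ 4 * ε := by
  set f : Fin n → ℝ := fun i => |p i - q i| with hf
  have hfnn : ∀ i, 0 ≤ f i := fun i => abs_nonneg _
  set g : Fin n × Fin n → ℝ := fun m => f m.1 + f m.2 with hg
  have hgnn : ∀ m, 0 ≤ g m := fun m => add_nonneg (hfnn _) (hfnn _)
  -- pointwise bound on M
  have hpt : ∑ m ∈ M, (p m.1 - p m.2) ≤ ∑ m ∈ M, g m := by
    apply Finset.sum_le_sum
    intro m hm
    obtain ⟨h1, h2⟩ := hpq m hm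
    have := abs_nonneg (p m.1 - q m.1)
    have e1 : p m.1 - q m.1 ≤ |p m.1 - q m.1| := le_abs_self _
    have e2 : q m.2 - p m.2 ≤ |p m.2 - q m.2| := by
      rw [abs_sub_comm]; exact le_abs_self _
    simp only [hg, hf]
    linarith
  have hb1 := pair_sum_le f hfnn M1 hM1 k1 hk1
  have hb2 := pair_sum_le f hfnn M2 hM2 k2 hk2
  have hsplit : ∑ m ∈ M, g m ≤ ∑ m ∈ M1, g m + ∑ m ∈ M2, g m + g (k1, k2) := by
    rw [hM]
    calc ∑ m ∈ M1 ∪ M2 ∪ {(k1, k2)}, g m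
        ≤ ∑ m ∈ M1 ∪ M2, g m + ∑ m ∈ ({(k1, k2)} : Finset (Fin n × Fin n)), g m :=
          sum_union_le' g hgnn _ _
      _ ≤ (∑ m ∈ M1, g m + ∑ m ∈ M2, g m) + g (k1, k2) := by
          rw [Finset.sum_singleton]
          exact add_le_add (sum_union_le' g hgnn _ _) le_rfl
  have htv : ∑ i, f i = 2 * dTV p q := by
    unfold dTV; ring
  have hM1g : ∑ m ∈ M1, g m = ∑ m ∈ M1, (f m.1 + f m.2) := rfl
  have hM2g : ∑ m ∈ M2, g m = ∑ m ∈ M2, (f m.1 + f m.2) := rfl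
  have hgk : g (k1, k2) = f k1 + f k2 := rfl
  have htve : dTV p q ≤ ε := hε
  calc ∑ m ∈ M, (p m.1 - p m.2) ≤ ∑ m ∈ M, g m := hpt
    _ ≤ ∑ m ∈ M1, g m + ∑ m ∈ M2, g m + g (k1, k2) := hsplit
    _ ≤ 2 * ∑ i, f i := by rw [hM1g, hM2g, hgk]; linarith
    _ = 4 * dTV p q := by rw [htv]; ring
    _ ≤ 4 * ε := by linarith
end

section
/- Let p and q be probability distributions on [n]. If the total variation distance satisfies d_TV(p,q) ≤ ε, then the expected cost of guesswork under mismatch satisfies δ(p,q) ≤ 2(n−1)ε. -/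
open Finset

/-- if `d_TV(p,q) ≤ ε`, then `δ(p,q) ≤ 2(n−1)ε`. -/
theorem mismatchCost_le_of_dTV {n : ℕ} (p q : Fin n → ℝ)
    (hp : IsDist p) (hq : IsDist q) (ε : ℝ) (hε : dTV p q ≤ ε)
    (Gp : Equiv.Perm (Fin n)) (hGp : IsOptimal p Gp) :
    mismatchCost p q Gp ≤ 2 * ((n : ℝ) - 1) * ε := by
  have hn : 0 < n := by
    by_contra h
    push_neg at h
    have := hp.2
    rw [Finset.sum_eq_zero] at this
    · norm_num at this
    · intro i _; exact absurd i.2 (by omega)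
  obtain ⟨Gq, hGq⟩ : ∃ Gq, IsOptimal q Gq := by
    obtain ⟨Gq, -, h⟩ := Finset.exists_min_image Finset.univ (guesswork q)
      ⟨1, Finset.mem_univ 1⟩
    exact ⟨Gq, fun H => h H (Finset.mem_univ H)⟩
  have hmem : Delta p Gp Gq ∈ {x | ∃ G : Equiv.Perm (Fin n), IsOptimal q G ∧ x = Delta p Gp G} :=
    ⟨Gq, hGq, rfl⟩
  have hbdd : BddBelow {x | ∃ G : Equiv.Perm (Fin n), IsOptimal q G ∧ x = Delta p Gp G} := by
    apply Set.Finite.bddBelow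
    apply Set.Finite.subset (Set.finite_range (Delta p Gp))
    rintro x ⟨G, -, rfl⟩; exact ⟨G, rfl⟩
  refine (csInf_le hbdd hmem).trans ?_
  have hdnn : 0 ≤ dTV p q := by
    rw [dTV]; positivity
  have hεnn : 0 ≤ ε := le_trans hdnn hε
  have h2 : guesswork q Gq - guesswork q Gp ≤ 0 := sub_nonpos.mpr (hGq Gp)
  have expand : Delta p Gp Gq =
      (∑ i, (p i - q i) * (((Gq i : ℕ) : ℝ) - ((Gp i : ℕ) : ℝ)))
        + (guesswork q Gq - guesswork q Gp) := by
    simp only [Delta, guesswork, ← Finset.sum_sub_distrib, ← Finset.sum_add_distrib]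
    apply Finset.sum_congr rfl
    intros; ring
  have hterm : ∑ i, (p i - q i) * (((Gq i : ℕ) : ℝ) - ((Gp i : ℕ) : ℝ))
      ≤ ∑ i, |p i - q i| * ((n : ℝ) - 1) := by
    apply Finset.sum_le_sum
    intro i _
    calc (p i - q i) * (((Gq i : ℕ) : ℝ) - ((Gp i : ℕ) : ℝ))
        ≤ |(p i - q i) * (((Gq i : ℕ) : ℝ) - ((Gp i : ℕ) : ℝ))| := le_abs_self _
      _ = |p i - q i| * |((Gq i : ℕ) : ℝ) - ((Gp i : ℕ) : ℝ)| := abs_mul _ _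
      _ ≤ |p i - q i| * ((n : ℝ) - 1) := by
          apply mul_le_mul_of_nonneg_left _ (abs_nonneg _)
          rw [abs_sub_le_iff]
          have h1 : ((Gq i : ℕ) : ℝ) ≤ (n : ℝ) - 1 := by
            have := (Gq i).2
            have : ((Gq i : ℕ) : ℝ) ≤ (n : ℝ) - 1 := by
              have hle : (Gq i : ℕ) ≤ n - 1 := by omega
              calc ((Gq i : ℕ) : ℝ) ≤ ((n - 1 : ℕ) : ℝ) := by exact_mod_cast hle
                _ ≤ (n : ℝ) - 1 := by
                  rw [Nat.cast_sub hn]; norm_num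
            exact this
          have h2' : ((Gp i : ℕ) : ℝ) ≤ (n : ℝ) - 1 := by
            have := (Gp i).2
            have hle : (Gp i : ℕ) ≤ n - 1 := by omega
            calc ((Gp i : ℕ) : ℝ) ≤ ((n - 1 : ℕ) : ℝ) := by exact_mod_cast hle
              _ ≤ (n : ℝ) - 1 := by rw [Nat.cast_sub hn]; norm_num
          have h3 : (0 : ℝ) ≤ ((Gq i : ℕ) : ℝ) := by positivity
          have h4 : (0 : ℝ) ≤ ((Gp i : ℕ) : ℝ) := by positivity
          constructor <;> linarith
  have hsum : ∑ i, |p i - q i| * ((n : ℝ) - 1) = 2 * ((n : ℝ) - 1) * dTV p q := by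
    rw [dTV, ← Finset.sum_mul]; ring
  have hfinal : 2 * ((n : ℝ) - 1) * dTV p q ≤ 2 * ((n : ℝ) - 1) * ε := by
    apply mul_le_mul_of_nonneg_left hε
    have : (1 : ℝ) ≤ (n : ℝ) := by exact_mod_cast hn
    linarith
  linarith [expand, hterm, hsum, hfinal]
end

section
/- Let n ≥ 2, let 0 < γ < 1, and let 0 < ε ≤ 1/n. Define the probability distribution p on [n] by p_1 = 1/n + γε, p_i = 1/n for 1 < i < n, and p_n = 1/n − γε. Then for any probability distribution q on [n] satisfying q_i < q_j for all i < j and d_TV(p,q) ≤ ε, the expected cost of guesswork under mismatch is exactly δ(p,q) = 2(n−1)γε; moreover, such a distribution q exists. -/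
open Finset

/-- Splitting a `p`-weighted sum for the near-uniform `p`. -/
lemma sum_split {n : ℕ} (hn : 2 ≤ n) (a : ℝ) (p : Fin n → ℝ)
    (hpdef : ∀ i : Fin n,
      p i = if (i : ℕ) = 0 then 1 / n + a
            else if (i : ℕ) = n - 1 then 1 / n - a
            else 1 / n)
    (f : Fin n → ℝ) :
    ∑ i, p i * f i
      = (1 / n) * ∑ i, f i + a * f ⟨0, by omega⟩ - a * f ⟨n - 1, by omega⟩ := by
  have hne : (⟨0, by omega⟩ : Fin n) ≠ ⟨n - 1, by omega⟩ := by
    simp only [ne_eq, Fin.ext_iff]; omega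
  have h0 : ∑ i, (p i - 1 / n) * f i
      = (p ⟨0, by omega⟩ - 1/n) * f ⟨0, by omega⟩
        + (p ⟨n - 1, by omega⟩ - 1/n) * f ⟨n - 1, by omega⟩ := by
    refine Finset.sum_eq_add_of_mem _ _ (mem_univ _) (mem_univ _) hne ?_
    rintro c - ⟨hc0, hcL⟩
    have h1 : (c : ℕ) ≠ 0 := fun h => hc0 (Fin.ext h)
    have h2 : (c : ℕ) ≠ n - 1 := fun h => hcL (Fin.ext h)
    rw [hpdef c, if_neg h1, if_neg h2]; ring
  have hp0 : p ⟨0, by omega⟩ = 1 / n + a := by rw [hpdef]; simp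
  have hpL : p (⟨n - 1, by omega⟩ : Fin n) = 1 / n - a := by
    rw [hpdef]
    have : ¬ ((⟨n - 1, by omega⟩ : Fin n) : ℕ) = 0 := by simp; omega
    rw [if_neg this, if_pos rfl]
  calc ∑ i, p i * f i = ∑ i, ((1/n) * f i + (p i - 1/n) * f i) := by
        refine Finset.sum_congr rfl fun i _ => by ring
    _ = (1/n) * ∑ i, f i + ∑ i, (p i - 1/n) * f i := by
        rw [Finset.sum_add_distrib, Finset.mul_sum]
    _ = _ := by rw [h0, hp0, hpL]; ring

lemma guesswork_eq {n : ℕ} (p : Fin n → ℝ) (G : Equiv.Perm (Fin n)) :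
    guesswork p G = (∑ i, p i * ((G i : ℕ) : ℝ)) + ∑ i, p i := by
  unfold guesswork
  rw [← Finset.sum_add_distrib]
  exact Finset.sum_congr rfl fun i _ => by ring

/-- For strictly increasing `q`, the reversal is an optimal guessing function. -/
lemma rev_optimal {n : ℕ} (q : Fin n → ℝ)
    (hq : ∀ i j : Fin n, i < j → q i < q j) : IsOptimal q Fin.revPerm := by
  intro H
  rw [guesswork_eq, guesswork_eq]
  refine add_le_add ?_ le_rfl
  have hav : Antivary q (fun i : Fin n => ((Fin.rev i : ℕ) : ℝ)) := by
    intro i j hij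
    simp only [Nat.cast_lt, ← Fin.lt_iff_val_lt_val, Fin.rev_lt_rev] at hij
    exact (hq j i hij).le
  have key := hav.sum_smul_le_sum_smul_comp_perm (σ := H.trans Fin.revPerm)
  simp only [smul_eq_mul, Equiv.trans_apply, Fin.rev_rev, Equiv.Perm.coe_mul,
    Function.comp_apply, Fin.revPerm_apply] at key ⊢
  exact key

/-- For strictly increasing `q`, the reversal is the unique optimal guessing
function. -/
lemma optimal_eq_rev {n : ℕ} (q : Fin n → ℝ)
    (hq : ∀ i j : Fin n, i < j → q i < q j) (G : Equiv.Perm (Fin n))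
    (hG : IsOptimal q G) : G = Fin.revPerm := by
  have hanti : ∀ i j : Fin n, i < j → G j < G i := by
    intro i j hij
    by_contra hcon
    push_neg at hcon
    have hlt : G i < G j := lt_of_le_of_ne hcon (fun h => (hij.ne (G.injective h)).elim)
    have hne : i ≠ j := hij.ne
    have hswap := hG (G * Equiv.swap i j)
    rw [guesswork_eq, guesswork_eq] at hswap
    have hsum : ∑ k, (q k * (((G * Equiv.swap i j) k : ℕ) : ℝ)
        - q k * ((G k : ℕ) : ℝ))
        = (q i - q j) * (((G j : ℕ) : ℝ) - ((G i : ℕ) : ℝ)) := by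
      rw [Finset.sum_eq_add_of_mem (f := fun k =>
          q k * (((G * Equiv.swap i j) k : ℕ) : ℝ) - q k * ((G k : ℕ) : ℝ))
          i j (mem_univ _) (mem_univ _) hne ?_]
      · simp only [Equiv.Perm.mul_apply, Equiv.swap_apply_left, Equiv.swap_apply_right]
        ring
      · rintro c - ⟨hci, hcj⟩
        simp [Equiv.Perm.mul_apply, Equiv.swap_apply_of_ne_of_ne hci hcj]
    rw [Finset.sum_sub_distrib] at hsum
    have hq' : q i < q j := hq i j hij
    have hG' : ((G i : ℕ) : ℝ) < ((G j : ℕ) : ℝ) := by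
      exact_mod_cast Fin.lt_iff_val_lt_val.mp hlt
    nlinarith [hswap, hsum]
  have hsm : StrictMono (fun i : Fin n => G (Fin.rev i)) := by
    intro i j hij
    exact hanti _ _ (Fin.rev_lt_rev.mpr hij)
  have hid : (fun i : Fin n => G (Fin.rev i)) = id := by
    have inst : WellFoundedLT (Fin n) := inferInstance
    rw [← @StrictMono.range_inj (Fin n) (Fin n) _ _ inst _ id hsm strictMono_id]
    have hsurj : Function.Surjective (fun i : Fin n => G (Fin.rev i)) :=
      G.surjective.comp Fin.rev_surjective
    rw [Set.range_id, Set.range_eq_univ.mpr hsurj]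
  ext i
  have h := congrFun hid (Fin.rev i)
  simp only [Fin.rev_rev, id_eq] at h
  rw [h, Fin.revPerm_apply]

/-- for the near-uniform distribution `p` of Example 2, any `q`
with strictly increasing probabilities within total variation `ε` of `p`
achieves `δ(p,q) = 2(n−1)γε`; moreover such a `q` exists. -/
theorem example_optimal_cost {n : ℕ} (hn : 2 ≤ n) (γ ε : ℝ)
    (hγ : 0 < γ ∧ γ < 1) (hε : 0 < ε ∧ ε ≤ 1 / n)
    (p : Fin n → ℝ)
    (hpdef : ∀ i : Fin n,
      p i = if (i : ℕ) = 0 then 1 / n + γ * ε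
            else if (i : ℕ) = n - 1 then 1 / n - γ * ε
            else 1 / n) :
    (∀ q : Fin n → ℝ, IsDist q → (∀ i j : Fin n, i < j → q i < q j) →
      dTV p q ≤ ε → ∀ Gp : Equiv.Perm (Fin n), IsOptimal p Gp →
        mismatchCost p q Gp = 2 * ((n : ℝ) - 1) * γ * ε) ∧
    (∃ q : Fin n → ℝ, IsDist q ∧ (∀ i j : Fin n, i < j → q i < q j) ∧
      dTV p q ≤ ε) := by
  obtain ⟨hγ0, hγ1⟩ := hγ
  obtain ⟨hε0, hεn⟩ := hε
  have hn0 : (0:ℝ) < n := by positivity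
  have hn1 : (1:ℝ) ≤ (n:ℝ) - 1 := by
    have : (2:ℝ) ≤ n := by exact_mod_cast hn
    linarith
  have hγε : 0 < γ * ε := by positivity
  have hrevsum : ∀ g : Fin n → ℝ, ∑ i, g (Fin.rev i) = ∑ i, g i := by
    intro g
    exact Equiv.sum_comp Fin.revPerm g
  have hrev0 : ((Fin.rev (⟨0, by omega⟩ : Fin n) : ℕ) : ℝ) = (n:ℝ) - 1 := by
    rw [Fin.val_rev]
    have h1 : (1:ℕ) ≤ n := by omega
    push_cast [Nat.sub_add_eq, Nat.cast_sub h1]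
    ring
  have hrevL : ((Fin.rev (⟨n - 1, by omega⟩ : Fin n) : ℕ) : ℝ) = 0 := by
    rw [Fin.val_rev]
    norm_num
    omega
  have hvL : (((⟨n - 1, by omega⟩ : Fin n) : ℕ) : ℝ) = (n:ℝ) - 1 := by
    have h1 : (1:ℕ) ≤ n := by omega
    push_cast [Nat.cast_sub h1]
    ring
  constructor
  · -- main computation
    intro q hqdist hqmono hdtv Gp hGp
    have hpmono : ∀ i j : Fin n, i < j → p j ≤ p i := by
      intro i j hij
      have hij' : (i : ℕ) < (j : ℕ) := hij
      have hi := i.isLt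
      have hj := j.isLt
      rw [hpdef i, hpdef j]
      split_ifs <;> first | linarith | omega
    have hidopt : IsOptimal p 1 := by
      intro H
      rw [guesswork_eq, guesswork_eq]
      refine add_le_add ?_ le_rfl
      have hav : Antivary p (fun i : Fin n => ((i : ℕ) : ℝ)) := by
        intro i j hij
        simp only [Nat.cast_lt, ← Fin.lt_iff_val_lt_val] at hij
        exact hpmono i j hij
      have key := hav.sum_smul_le_sum_smul_comp_perm (σ := H)
      simp only [smul_eq_mul] at key
      simpa using key
    have hGpval : ∑ i, p i * ((Gp i : ℕ) : ℝ) = ∑ i, p i * ((i : ℕ) : ℝ) := by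
      have h3 : guesswork p Gp = guesswork p 1 := le_antisymm (hGp 1) (hidopt Gp)
      rw [guesswork_eq, guesswork_eq] at h3
      have h4 : ∑ i, p i * (((1 : Equiv.Perm (Fin n)) i : ℕ) : ℝ)
          = ∑ i, p i * ((i : ℕ) : ℝ) := rfl
      linarith [h3]
    have hset : {x | ∃ Gq : Equiv.Perm (Fin n), IsOptimal q Gq ∧ x = Delta p Gp Gq}
        = {Delta p Gp Fin.revPerm} := by
      ext x
      simp only [Set.mem_setOf_eq, Set.mem_singleton_iff]
      constructor
      · rintro ⟨Gq, hGq, rfl⟩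
        rw [optimal_eq_rev q hqmono Gq hGq]
      · rintro rfl
        exact ⟨Fin.revPerm, rev_optimal q hqmono, rfl⟩
    rw [mismatchCost, hset, csInf_singleton]
    have hdelta : Delta p Gp Fin.revPerm
        = ∑ i, p i * (((Fin.rev i : ℕ) : ℝ) - ((i : ℕ) : ℝ)) := by
      unfold Delta
      have e1 : ∑ i, p i * (((Fin.revPerm i : ℕ) : ℝ) - ((Gp i : ℕ) : ℝ))
          = ∑ i, p i * ((Fin.rev i : ℕ) : ℝ) - ∑ i, p i * ((Gp i : ℕ) : ℝ) := by
        rw [← Finset.sum_sub_distrib]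
        exact Finset.sum_congr rfl fun i _ => by rw [Fin.revPerm_apply]; ring
      have e2 : ∑ i, p i * (((Fin.rev i : ℕ) : ℝ) - ((i : ℕ) : ℝ))
          = ∑ i, p i * ((Fin.rev i : ℕ) : ℝ) - ∑ i, p i * ((i : ℕ) : ℝ) := by
        rw [← Finset.sum_sub_distrib]
        exact Finset.sum_congr rfl fun i _ => by ring
      rw [e1, e2, hGpval]
    rw [hdelta, sum_split hn (γ * ε) p hpdef]
    have hzero : ∑ i : Fin n, (((Fin.rev i : ℕ) : ℝ) - ((i : ℕ) : ℝ)) = 0 := by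
      rw [Finset.sum_sub_distrib]
      have := hrevsum (fun i : Fin n => ((i : ℕ) : ℝ))
      rw [this, sub_self]
    rw [hzero, hrev0, hrevL, hvL]
    ring
  · -- existence of q
    have hnne : (n:ℝ) ≠ 0 := ne_of_gt hn0
    have hn1ne : (n:ℝ) - 1 ≠ 0 := by linarith
    set δ : ℝ := (1 - γ) * ε / (n * (n - 1)) with hδdef
    have hδ0 : 0 < δ := by
      apply div_pos (by nlinarith) (by nlinarith)
    have hδn : δ * ((n:ℝ) - 1) = (1 - γ) * ε / n := by
      rw [hδdef]; field_simp
    have hcast : ∀ j : Fin n, ((j:ℕ):ℝ) ≤ (n:ℝ) - 1 := by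
      intro j
      have h1 : (j:ℕ) ≤ n - 1 := by have := j.isLt; omega
      calc ((j:ℕ):ℝ) ≤ ((n-1:ℕ):ℝ) := by exact_mod_cast h1
        _ = (n:ℝ) - 1 := by
            push_cast [Nat.cast_sub (by omega : 1 ≤ n)]; ring
    have htabs : ∀ i : Fin n, |((i:ℕ):ℝ) - ((Fin.rev i:ℕ):ℝ)| ≤ (n:ℝ) - 1 := by
      intro i
      have h1 := hcast i
      have h2 := hcast (Fin.rev i)
      have h3 : (0:ℝ) ≤ ((i:ℕ):ℝ) := by positivity
      have h4 : (0:ℝ) ≤ ((Fin.rev i:ℕ):ℝ) := by positivity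
      rw [abs_le]
      constructor <;> linarith
    have ht0 : ∑ i : Fin n, (((i:ℕ):ℝ) - ((Fin.rev i:ℕ):ℝ)) = 0 := by
      rw [Finset.sum_sub_distrib]
      have h := hrevsum (fun i : Fin n => ((i:ℕ):ℝ))
      rw [h, sub_self]
    have hone : (1-γ)*ε ≤ 1 := by
      have hinv : 1/(n:ℝ) ≤ 1 := by
        rw [div_le_one hn0]; linarith
      nlinarith
    refine ⟨fun i => 1 / n + δ * (((i : ℕ) : ℝ) - ((Fin.rev i : ℕ) : ℝ)), ⟨?_, ?_⟩, ?_, ?_⟩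
    · intro i
      have h6 : -((n:ℝ)-1) ≤ ((i:ℕ):ℝ) - ((Fin.rev i:ℕ):ℝ) := (abs_le.mp (htabs i)).1
      have h7 := mul_le_mul_of_nonneg_left h6 hδ0.le
      have h8 : (0:ℝ) ≤ (1 - (1-γ)*ε) * (1/(n:ℝ)) :=
        mul_nonneg (by linarith) (by positivity)
      have h9 : (1-γ)*ε/(n:ℝ) ≤ 1/(n:ℝ) := by gcongr
      show (0:ℝ) ≤ 1 / n + δ * (((i : ℕ) : ℝ) - ((Fin.rev i : ℕ) : ℝ))
      linarith [h7, hδn, h9]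
    · rw [Finset.sum_add_distrib, Finset.sum_const, ← Finset.mul_sum, ht0,
        Finset.card_univ, Fintype.card_fin, nsmul_eq_mul]
      field_simp
      ring
    · intro i j hij
      have h1 : ((i:ℕ):ℝ) < ((j:ℕ):ℝ) := by exact_mod_cast hij
      have h2 : ((Fin.rev j:ℕ):ℝ) < ((Fin.rev i:ℕ):ℝ) := by
        exact_mod_cast Fin.rev_lt_rev.mpr hij
      have h3 : (((i:ℕ):ℝ) - ((Fin.rev i:ℕ):ℝ)) < (((j:ℕ):ℝ) - ((Fin.rev j:ℕ):ℝ)) := by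
        linarith
      have := mul_lt_mul_of_pos_left h3 hδ0
      show (1:ℝ) / n + δ * _ < 1 / n + δ * _
      linarith
    · unfold dTV
      have hp0 : p ⟨0, by omega⟩ = 1 / n + γ * ε := by rw [hpdef]; simp
      have hpL : p (⟨n - 1, by omega⟩ : Fin n) = 1 / n - γ * ε := by
        rw [hpdef]
        have h : ¬ (((⟨n - 1, by omega⟩ : Fin n) : ℕ) = 0) := by simp; omega
        rw [if_neg h, if_pos rfl]
      have hne : (⟨0, by omega⟩ : Fin n) ≠ ⟨n - 1, by omega⟩ := by
        simp only [ne_eq, Fin.ext_iff]; omega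
      have habs_sum : ∑ i : Fin n, |p i - 1/n| = 2 * (γ*ε) := by
        rw [Finset.sum_eq_add_of_mem (⟨0, by omega⟩ : Fin n) ⟨n - 1, by omega⟩
          (mem_univ _) (mem_univ _) hne ?_]
        · rw [hp0, hpL]
          have e1 : 1 / (n:ℝ) + γ * ε - 1/n = γ * ε := by ring
          have e2 : 1 / (n:ℝ) - γ * ε - 1/n = -(γ * ε) := by ring
          rw [e1, e2, abs_neg, abs_of_pos hγε]
          ring
        · rintro c - ⟨hc0, hcL⟩
          have h1 : (c : ℕ) ≠ 0 := fun h => hc0 (Fin.ext h)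
          have h2 : (c : ℕ) ≠ n - 1 := fun h => hcL (Fin.ext h)
          rw [hpdef c, if_neg h1, if_neg h2]
          simp
      have hterm : ∀ i : Fin n,
          |p i - (1 / n + δ * (((i : ℕ) : ℝ) - ((Fin.rev i : ℕ) : ℝ)))|
            ≤ |p i - 1/n| + δ * ((n:ℝ)-1) := by
        intro i
        have e : p i - (1 / n + δ * (((i : ℕ) : ℝ) - ((Fin.rev i : ℕ) : ℝ)))
            = (p i - 1/n) + (-(δ * (((i : ℕ) : ℝ) - ((Fin.rev i : ℕ) : ℝ)))) := by ring
        rw [e]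
        refine (abs_add_le _ _).trans ?_
        rw [abs_neg, abs_mul, abs_of_pos hδ0]
        have := mul_le_mul_of_nonneg_left (htabs i) hδ0.le
        linarith
      have hsum : ∑ i : Fin n,
          |p i - (1 / n + δ * (((i : ℕ) : ℝ) - ((Fin.rev i : ℕ) : ℝ)))|
            ≤ 2 * (γ*ε) + (n:ℝ) * (δ * ((n:ℝ)-1)) := by
        calc ∑ i : Fin n, |p i - (1 / n + δ * (((i : ℕ) : ℝ) - ((Fin.rev i : ℕ) : ℝ)))|
            ≤ ∑ i : Fin n, (|p i - 1/n| + δ * ((n:ℝ)-1)) :=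
              Finset.sum_le_sum fun i _ => hterm i
          _ = 2 * (γ*ε) + (n:ℝ) * (δ * ((n:ℝ)-1)) := by
              rw [Finset.sum_add_distrib, habs_sum, Finset.sum_const,
                Finset.card_univ, Fintype.card_fin, nsmul_eq_mul]
      have hfin : (n:ℝ) * (δ * ((n:ℝ)-1)) = (1-γ)*ε := by
        rw [hδn]; field_simp
      rw [hfin] at hsum
      nlinarith [hsum]
end
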